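/- The complement of the barrier hypersurface has exactly three connected components (part of Lemma 3.5): let M > 0 and let f : [0,∞) → ℝ be a continuous non-decreasing function with f(0) = 0, f(x) > 0 for x > 0, and f(x) ≤ 1/2 for all x. In ℝ⁴ with coordinates (x₁,y₁,x₂,y₂), set ℋ⁺ := {x₂ ≥ 2M, |y₂| = f(x₂ − 2M)}, ℋ⁻ := {x₂ ≤ −2M, |y₂| = f(−x₂ − 2M)}, and U := {y₂ > −1}. Then U ∖ (ℋ⁺ ∪ ℋ⁻) has exactly three connected components, namely V⁺ := {x₂ > 2M, |y₂| < f(x₂ − 2M)}, V⁻ := {x₂ < −2M, |y₂| < f(−x₂ − 2M)}, and V := U ∖ (ℋ⁺ ∪ ℋ⁻ ∪ V⁺ ∪ V⁻); in particular ℋ⁺ separates V from V⁺ and ℋ⁻ separates V from V⁻. -/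

import Mathlib

noncomputable section

/-- The upper part `ℋ⁺ = {x₂ ≥ 2M, |y₂| = f(x₂ − 2M)}` of the barrier
hypersurface, in coordinates `(x₁, y₁, x₂, y₂)` (indices `0, 1, 2, 3`). -/
def Hplus (M : ℝ) (f : ℝ → ℝ) : Set (Fin 4 → ℝ) :=
  {p | 2 * M ≤ p 2 ∧ |p 3| = f (p 2 - 2 * M)}

/-- The lower part `ℋ⁻ = {x₂ ≤ −2M, |y₂| = f(−x₂ − 2M)}`. -/
def Hminus (M : ℝ) (f : ℝ → ℝ) : Set (Fin 4 → ℝ) :=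
  {p | p 2 ≤ -(2 * M) ∧ |p 3| = f (-(p 2) - 2 * M)}

/-- The ambient region `U = {y₂ > −1}`. -/
def Uset : Set (Fin 4 → ℝ) :=
  {p | -1 < p 3}

/-- The component `V⁺ = {x₂ > 2M, |y₂| < f(x₂ − 2M)}`. -/
def Vplus (M : ℝ) (f : ℝ → ℝ) : Set (Fin 4 → ℝ) :=
  {p | 2 * M < p 2 ∧ |p 3| < f (p 2 - 2 * M)}

/-- The component `V⁻ = {x₂ < −2M, |y₂| < f(−x₂ − 2M)}`. -/
def Vminus (M : ℝ) (f : ℝ → ℝ) : Set (Fin 4 → ℝ) :=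
  {p | p 2 < -(2 * M) ∧ |p 3| < f (-(p 2) - 2 * M)}

/-- The middle component `V = U ∖ (ℋ⁺ ∪ ℋ⁻ ∪ V⁺ ∪ V⁻)`. -/
def Vmid (M : ℝ) (f : ℝ → ℝ) : Set (Fin 4 → ℝ) :=
  Uset \ (Hplus M f ∪ Hminus M f ∪ Vplus M f ∪ Vminus M f)

/-!
The three pieces are pairwise disjoint and open: `V⁺` and `V⁻` by continuity of `f`, and `V`
because, as `f 0 = 0`, it is `U` minus the closed regions `{±x₂ ≥ 2M, |y₂| ≤ f(±x₂ − 2M)}`.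
So each is a union of components of `U ∖ (ℋ⁺ ∪ ℋ⁻)`, and it remains to show that each is
path-connected. A point of `V⁺` moves vertically to `y₂ = 0` and then along the convex
axis `{x₂ > 2M, y₂ = 0}`, which lies in `V⁺` because `f > 0`; `V⁻` is the mirror image of `V⁺`
under `x₂ ↦ −x₂`. A point of `V` moves vertically away from `y₂ = 0` until `|y₂| = 3/4`; this
keeps it off both barriers, since `|y₂|` only grows or stays above `1/2 ≥ f`. The slabs
`{y₂ > 1/2}` and `{−1 < y₂ < −1/2}` lie in `V` and are joined through the strip `|x₂| < 2M`.
-/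

open Set Function

theorem IsOpen.isOpen_lt {X α : Type*} [TopologicalSpace X] [TopologicalSpace α]
    [LinearOrder α] [OrderClosedTopology α] {s : Set X} {g h : X → α} (hs : IsOpen s)
    (hg : ContinuousOn g s) (hh : ContinuousOn h s) : IsOpen {x ∈ s | g x < h x} :=
  (hg.prodMk hh).isOpen_inter_preimage hs isOpen_lt_prod

theorem Convex.setOf_apply_mem {ι : Type*} {s : Set ℝ} (hs : Convex ℝ s) (i : ι) :
    Convex ℝ {p : ι → ℝ | p i ∈ s} :=
  hs.linear_preimage (LinearMap.proj (R := ℝ) (φ := fun _ : ι => ℝ) i)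

theorem Convex.joinedIn_of_subset {E : Type*} [AddCommGroup E] [Module ℝ E]
    [TopologicalSpace E] [IsTopologicalAddGroup E] [ContinuousSMul ℝ E] {C s : Set E}
    (hC : Convex ℝ C) (hCs : C ⊆ s) {x y : E} (hx : x ∈ C) (hy : y ∈ C) : JoinedIn s x y :=
  ((hC.isPathConnected ⟨x, hx⟩).joinedIn x hx y hy).mono hCs

theorem joinedIn_update_of_forall_mem_uIcc {ι : Type*} [DecidableEq ι] {s : Set (ι → ℝ)}
    {p : ι → ℝ} {i : ι} {c : ℝ} (h : ∀ y ∈ uIcc (p i) c, update p i y ∈ s) :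
    JoinedIn s p (update p i c) := by
  have hseg : JoinedIn (uIcc (p i) c) (p i) c :=
    ((convex_uIcc _ _).isPathConnected nonempty_uIcc).joinedIn _ left_mem_uIcc _ right_mem_uIcc
  simpa using (hseg.map (continuous_const.update i continuous_id)).mono (image_subset_iff.2 h)

theorem min_abs_le_abs_of_mem_uIcc {a c y : ℝ} (hac : 0 ≤ a * c) (hy : y ∈ uIcc a c) :
    min |a| |c| ≤ |y| := by
  rw [min_le_iff]
  rcases mul_nonneg_iff.1 hac with ⟨ha, hc⟩ | ⟨ha, hc⟩ <;>
    rcases mem_uIcc.1 hy with ⟨h1, h2⟩ | ⟨h1, h2⟩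
  · exact .inl (abs_le_abs_of_nonneg ha h1)
  · exact .inr (abs_le_abs_of_nonneg hc h1)
  · exact .inr (abs_le_abs_of_nonpos hc h2)
  · exact .inl (abs_le_abs_of_nonpos ha h2)

theorem connectedComponentIn_eq_of_isOpen_of_isPreconnected {X : Type*} [TopologicalSpace X]
    {S A B : Set X} (hS : S = A ∪ B) (hA : IsOpen A) (hB : IsOpen B) (hAB : Disjoint A B)
    (hA_conn : IsPreconnected A) {p : X} (hp : p ∈ A) : connectedComponentIn S p = A := by
  subst hS
  refine Subset.antisymm ?_ (hA_conn.subset_connectedComponentIn hp subset_union_left)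
  exact isPreconnected_connectedComponentIn.subset_left_of_subset_union hA hB hAB
    (connectedComponentIn_subset _ _) ⟨p, mem_connectedComponentIn (Or.inl hp), hp⟩

def reflectX₂ (p : Fin 4 → ℝ) : Fin 4 → ℝ := update p 2 (-p 2)

@[simp] theorem reflectX₂_apply_two (p : Fin 4 → ℝ) : reflectX₂ p 2 = -p 2 := update_self ..

@[simp] theorem reflectX₂_apply_three (p : Fin 4 → ℝ) : reflectX₂ p 3 = p 3 :=
  update_of_ne (by decide) ..

theorem reflectX₂_involutive : Involutive reflectX₂ := fun p => by
  simp [reflectX₂]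

theorem continuous_reflectX₂ : Continuous reflectX₂ :=
  continuous_id.update 2 (continuous_apply 2).neg

section

variable {M : ℝ} {f : ℝ → ℝ}

theorem preimage_reflectX₂_Hplus : reflectX₂ ⁻¹' Hplus M f = Hminus M f := by
  ext p
  simp only [Hplus, Hminus, mem_preimage, mem_ofPred_eq, reflectX₂_apply_two,
    reflectX₂_apply_three, le_neg]

theorem preimage_reflectX₂_Vplus : reflectX₂ ⁻¹' Vplus M f = Vminus M f := by
  ext p
  simp only [Vplus, Vminus, mem_preimage, mem_ofPred_eq, reflectX₂_apply_two,
    reflectX₂_apply_three, lt_neg]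

theorem image_reflectX₂_Vplus : reflectX₂ '' Vplus M f = Vminus M f := by
  rw [reflectX₂_involutive.image_eq_preimage_symm, preimage_reflectX₂_Vplus]

def hornPlus (M : ℝ) (f : ℝ → ℝ) : Set (Fin 4 → ℝ) :=
  {p | 2 * M ≤ p 2 ∧ |p 3| ≤ f (p 2 - 2 * M)}

theorem hornPlus_eq (hf0 : f 0 = 0) : hornPlus M f = Hplus M f ∪ Vplus M f := by
  ext p
  constructor
  · rintro ⟨h2, h3⟩
    rcases h3.eq_or_lt with h3 | h3
    · exact Or.inl ⟨h2, h3⟩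
    · refine Or.inr ⟨h2.lt_of_ne fun h => ?_, h3⟩
      rw [← h, sub_self, hf0] at h3
      exact (abs_nonneg _).not_gt h3
  · rintro (⟨h2, h3⟩ | ⟨h2, h3⟩)
    exacts [⟨h2, h3.le⟩, ⟨h2.le, h3.le⟩]

theorem Vmid_eq_diff_horns (hf0 : f 0 = 0) :
    Vmid M f = Uset \ (hornPlus M f ∪ reflectX₂ ⁻¹' hornPlus M f) := by
  rw [hornPlus_eq hf0, preimage_union, preimage_reflectX₂_Hplus, preimage_reflectX₂_Vplus,
    union_union_union_comm, ← union_assoc, Vmid]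

theorem isOpen_Vplus (hf_cont : ContinuousOn f (Ici 0)) : IsOpen (Vplus M f) :=
  (isOpen_lt continuous_const (continuous_apply 2)).isOpen_lt
    (continuous_apply 3).abs.continuousOn
    (hf_cont.comp (by fun_prop) fun _ hp => mem_Ici.2 (sub_nonneg.2 (le_of_lt hp)))

theorem isClosed_hornPlus (hf_cont : ContinuousOn f (Ici 0)) : IsClosed (hornPlus M f) :=
  (isClosed_le continuous_const (continuous_apply 2)).isClosed_le
    (continuous_apply 3).abs.continuousOn
    (hf_cont.comp (by fun_prop) fun _ hp => mem_Ici.2 (sub_nonneg.2 hp))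

theorem isOpen_Vmid (hf_cont : ContinuousOn f (Ici 0)) (hf0 : f 0 = 0) : IsOpen (Vmid M f) := by
  rw [Vmid_eq_diff_horns hf0]
  exact (isOpen_lt continuous_const (continuous_apply 3)).sdiff
    ((isClosed_hornPlus hf_cont).union ((isClosed_hornPlus hf_cont).preimage continuous_reflectX₂))

theorem isPathConnected_Vplus (hf_pos : ∀ x > (0 : ℝ), 0 < f x) :
    IsPathConnected (Vplus M f) := by
  set axis := {p : Fin 4 → ℝ | p 2 ∈ Ioi (2 * M) ∧ p 3 ∈ ({0} : Set ℝ)}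
  have haxis : Convex ℝ axis :=
    ((convex_Ioi _).setOf_apply_mem 2).inter ((convex_singleton 0).setOf_apply_mem 3)
  have haxis_sub : axis ⊆ Vplus M f := fun p ⟨h2, h3⟩ =>
    ⟨h2, by rw [mem_singleton_iff.1 h3, abs_zero]; exact hf_pos _ (sub_pos.2 h2)⟩
  have hbase : (Pi.single 2 (2 * M + 1) : Fin 4 → ℝ) ∈ axis := by simp [axis]
  refine ⟨_, haxis_sub hbase, fun {p} hp => ?_⟩
  have hvert : JoinedIn (Vplus M f) p (update p 3 0) :=
    joinedIn_update_of_forall_mem_uIcc fun y hy => by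
      have hy' : |y| ≤ |p 3| := by simpa using abs_sub_right_of_mem_uIcc hy
      exact ⟨by simpa using hp.1, by simpa using hy'.trans_lt hp.2⟩
  exact (hvert.trans (haxis.joinedIn_of_subset haxis_sub (by simpa [axis] using hp.1) hbase)).symm

theorem mem_hornPlus_of_abs_le {p q : Fin 4 → ℝ} (hq : q ∈ hornPlus M f) (h2 : p 2 = q 2)
    (h3 : |p 3| ≤ |q 3|) : p ∈ hornPlus M f :=
  ⟨h2 ▸ hq.1, h2 ▸ h3.trans hq.2⟩

theorem notMem_hornPlus_of_half_lt_abs (hf_le : ∀ x ≥ (0 : ℝ), f x ≤ 1 / 2) {p : Fin 4 → ℝ}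
    (habs : 1 / 2 < |p 3|) : p ∉ hornPlus M f := fun ⟨h2, h3⟩ =>
  (h3.trans (hf_le _ (sub_nonneg.2 h2))).not_gt habs

theorem mem_Vmid_iff (hf0 : f 0 = 0) {p : Fin 4 → ℝ} :
    p ∈ Vmid M f ↔ -1 < p 3 ∧ p ∉ hornPlus M f ∧ reflectX₂ p ∉ hornPlus M f := by
  rw [Vmid_eq_diff_horns hf0]
  simp only [Uset, mem_sdiff, mem_union, mem_preimage, mem_ofPred_eq, not_or]

theorem mem_Vmid_of_abs_lt_two_mul (hf0 : f 0 = 0) {p : Fin 4 → ℝ} (h3 : -1 < p 3)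
    (h2 : |p 2| < 2 * M) : p ∈ Vmid M f := by
  refine (mem_Vmid_iff hf0).2 ⟨h3, fun h => ?_, fun h => ?_⟩
  · linarith [h.1, le_abs_self (p 2)]
  · linarith [h.1, reflectX₂_apply_two p, neg_abs_le (p 2)]

theorem mem_Vmid_of_half_lt_abs (hf0 : f 0 = 0) (hf_le : ∀ x ≥ (0 : ℝ), f x ≤ 1 / 2)
    {p : Fin 4 → ℝ} (h3 : -1 < p 3) (habs : 1 / 2 < |p 3|) : p ∈ Vmid M f := by
  exact (mem_Vmid_iff hf0).2 ⟨h3, notMem_hornPlus_of_half_lt_abs hf_le habs,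
    notMem_hornPlus_of_half_lt_abs hf_le (by simpa using habs)⟩

theorem mem_Vmid_of_abs_le (hf0 : f 0 = 0) {p q : Fin 4 → ℝ} (hp : p ∈ Vmid M f)
    (h2 : q 2 = p 2) (h3 : -1 < q 3) (habs : |p 3| ≤ |q 3|) : q ∈ Vmid M f := by
  obtain ⟨-, hp_horn, hp_horn'⟩ := (mem_Vmid_iff hf0).1 hp
  exact (mem_Vmid_iff hf0).2 ⟨h3, fun h => hp_horn (mem_hornPlus_of_abs_le h h2.symm habs),
    fun h => hp_horn' (mem_hornPlus_of_abs_le h (by simp [h2]) (by simpa using habs))⟩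

theorem joinedIn_Vmid_update_three (hf0 : f 0 = 0) (hf_le : ∀ x ≥ (0 : ℝ), f x ≤ 1 / 2)
    {p : Fin 4 → ℝ} (hp : p ∈ Vmid M f) {c : ℝ} (hc : -1 < c) (habs : 1 / 2 < |c|)
    (hpc : 0 ≤ p 3 * c) : JoinedIn (Vmid M f) p (update p 3 c) :=
  joinedIn_update_of_forall_mem_uIcc fun y hy => by
    have hy1 : -1 < y := (lt_min ((mem_Vmid_iff hf0).1 hp).1 hc).trans_le hy.1
    rcases min_le_iff.1 (min_abs_le_abs_of_mem_uIcc hpc hy) with h | h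
    · exact mem_Vmid_of_abs_le hf0 hp (by simp) (by simpa using hy1) (by simpa using h)
    · exact mem_Vmid_of_half_lt_abs hf0 hf_le (by simpa using hy1)
        (by simpa using habs.trans_le h)

theorem isPathConnected_Vmid (hM : 0 < M) (hf0 : f 0 = 0)
    (hf_le : ∀ x ≥ (0 : ℝ), f x ≤ 1 / 2) : IsPathConnected (Vmid M f) := by
  set top := {p : Fin 4 → ℝ | p 3 ∈ Ioi (1 / 2)}
  set bot := {p : Fin 4 → ℝ | p 3 ∈ Ioo (-1) (-(1 / 2))}
  set strip := {p : Fin 4 → ℝ | p 3 ∈ Ioi (-1) ∧ p 2 ∈ Ioo (-(2 * M)) (2 * M)}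
  have htop : top ⊆ Vmid M f := fun p (hp : 1 / 2 < p 3) =>
    mem_Vmid_of_half_lt_abs hf0 hf_le (by linarith) (hp.trans_le (le_abs_self _))
  have hbot : bot ⊆ Vmid M f := fun p (hp : -1 < p 3 ∧ p 3 < -(1 / 2)) =>
    mem_Vmid_of_half_lt_abs hf0 hf_le hp.1 (by linarith [neg_abs_le (p 3)])
  have hstrip : strip ⊆ Vmid M f := fun p (hp : -1 < p 3 ∧ -(2 * M) < p 2 ∧ p 2 < 2 * M) =>
    mem_Vmid_of_abs_lt_two_mul hf0 hp.1 (abs_lt.2 hp.2)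
  have hconv_top : Convex ℝ top := (convex_Ioi _).setOf_apply_mem 3
  have hconv_bot : Convex ℝ bot := (convex_Ioo _ _).setOf_apply_mem 3
  have hconv_strip : Convex ℝ strip :=
    ((convex_Ioi _).setOf_apply_mem 3).inter ((convex_Ioo _ _).setOf_apply_mem 2)
  let b (c : ℝ) : Fin 4 → ℝ := Pi.single 3 c
  have hb_strip : ∀ c > (-1 : ℝ), b c ∈ strip := fun c hc => by simp [strip, b, hc, hM]
  have hb_top : b (3 / 4) ∈ top := by norm_num [top, b]
  have hb_bot : b (-(3 / 4)) ∈ bot := by norm_num [bot, b]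
  refine ⟨b (3 / 4), htop hb_top, fun {p} hp => JoinedIn.symm ?_⟩
  rcases le_or_gt 0 (p 3) with h3 | h3
  · refine (joinedIn_Vmid_update_three hf0 hf_le hp (c := 3 / 4) (by norm_num) (by norm_num)
      (mul_nonneg h3 (by norm_num))).trans (hconv_top.joinedIn_of_subset htop ?_ hb_top)
    norm_num [top]
  · refine (joinedIn_Vmid_update_three hf0 hf_le hp (c := -(3 / 4)) (by norm_num)
      (by norm_num) (mul_nonneg_of_nonpos_of_nonpos h3.le (by norm_num))).trans
      ((hconv_bot.joinedIn_of_subset hbot ?_ hb_bot).trans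
        (hconv_strip.joinedIn_of_subset hstrip (hb_strip _ (by norm_num))
          (hb_strip _ (by norm_num))))
    norm_num [bot]

theorem Vplus_subset (hM : 0 ≤ M) (hf_le : ∀ x ≥ (0 : ℝ), f x ≤ 1 / 2) :
    Vplus M f ⊆ Uset \ (Hplus M f ∪ Hminus M f) := by
  rintro p ⟨h2, h3⟩
  refine ⟨show -1 < p 3 by linarith [hf_le _ (sub_nonneg.2 h2.le), neg_abs_le (p 3)], ?_⟩
  rintro (⟨-, h⟩ | ⟨h, -⟩)
  · exact h3.ne h
  · linarith

theorem Vminus_subset (hM : 0 ≤ M) (hf_le : ∀ x ≥ (0 : ℝ), f x ≤ 1 / 2) :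
    Vminus M f ⊆ Uset \ (Hplus M f ∪ Hminus M f) := by
  rintro p ⟨h2, h3⟩
  refine ⟨show -1 < p 3 by linarith [hf_le (-p 2 - 2 * M) (by linarith), neg_abs_le (p 3)], ?_⟩
  rintro (⟨h, -⟩ | ⟨-, h⟩)
  · linarith
  · exact h3.ne h

theorem Uset_diff_barrier_eq (hM : 0 ≤ M) (hf_le : ∀ x ≥ (0 : ℝ), f x ≤ 1 / 2) :
    Uset \ (Hplus M f ∪ Hminus M f) = Vplus M f ∪ Vminus M f ∪ Vmid M f := by
  rw [← union_sdiff_cancel (union_subset (Vplus_subset hM hf_le) (Vminus_subset hM hf_le)),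
    Vmid, union_assoc (Hplus M f ∪ Hminus M f), sdiff_sdiff]

end

theorem barrier_three_components_general (M : ℝ) (hM : 0 < M) (f : ℝ → ℝ)
    (hf_cont : ContinuousOn f (Set.Ici 0))
    (hf0 : f 0 = 0)
    (hf_pos : ∀ x > (0 : ℝ), 0 < f x)
    (hf_le : ∀ x ≥ (0 : ℝ), f x ≤ 1 / 2) :
    Uset \ (Hplus M f ∪ Hminus M f) = Vplus M f ∪ Vminus M f ∪ Vmid M f ∧
    (Vplus M f).Nonempty ∧ (Vminus M f).Nonempty ∧ (Vmid M f).Nonempty ∧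
    Disjoint (Vplus M f) (Vminus M f) ∧
    Disjoint (Vplus M f) (Vmid M f) ∧
    Disjoint (Vminus M f) (Vmid M f) ∧
    (∀ p ∈ Vplus M f,
      connectedComponentIn (Uset \ (Hplus M f ∪ Hminus M f)) p = Vplus M f) ∧
    (∀ p ∈ Vminus M f,
      connectedComponentIn (Uset \ (Hplus M f ∪ Hminus M f)) p = Vminus M f) ∧
    (∀ p ∈ Vmid M f,
      connectedComponentIn (Uset \ (Hplus M f ∪ Hminus M f)) p = Vmid M f) := by
  have hS := Uset_diff_barrier_eq hM.le hf_le
  have hpm : Disjoint (Vplus M f) (Vminus M f) :=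
    disjoint_left.2 fun p hp hq => by linarith [hp.1, hq.1]
  have hp_mid : Disjoint (Vplus M f) (Vmid M f) :=
    disjoint_left.2 fun _ hp hq => hq.2 (.inl (.inr hp))
  have hm_mid : Disjoint (Vminus M f) (Vmid M f) :=
    disjoint_left.2 fun _ hp hq => hq.2 (.inr hp)
  have hopen_plus : IsOpen (Vplus M f) := isOpen_Vplus hf_cont
  have hopen_minus : IsOpen (Vminus M f) :=
    preimage_reflectX₂_Vplus ▸ hopen_plus.preimage continuous_reflectX₂
  have hopen_mid : IsOpen (Vmid M f) := isOpen_Vmid hf_cont hf0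
  have hconn_plus : IsPathConnected (Vplus M f) := isPathConnected_Vplus hf_pos
  have hconn_minus : IsPathConnected (Vminus M f) :=
    image_reflectX₂_Vplus ▸ hconn_plus.image continuous_reflectX₂
  have hconn_mid := isPathConnected_Vmid hM hf0 hf_le
  refine ⟨hS, hconn_plus.nonempty, hconn_minus.nonempty, hconn_mid.nonempty, hpm, hp_mid,
    hm_mid, fun p hp => ?_, fun p hp => ?_, fun p hp => ?_⟩
  · exact connectedComponentIn_eq_of_isOpen_of_isPreconnected (hS.trans (union_assoc ..))
      hopen_plus (hopen_minus.union hopen_mid) (disjoint_union_right.2 ⟨hpm, hp_mid⟩)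
      hconn_plus.isConnected.isPreconnected hp
  · exact connectedComponentIn_eq_of_isOpen_of_isPreconnected
      (hS.trans (by rw [union_comm (Vplus M f), union_assoc]))
      hopen_minus (hopen_plus.union hopen_mid) (disjoint_union_right.2 ⟨hpm.symm, hm_mid⟩)
      hconn_minus.isConnected.isPreconnected hp
  · exact connectedComponentIn_eq_of_isOpen_of_isPreconnected (hS.trans (union_comm ..))
      hopen_mid (hopen_plus.union hopen_minus) (disjoint_union_right.2 ⟨hp_mid.symm, hm_mid.symm⟩)
      hconn_mid.isConnected.isPreconnected hp

/-- Part of Lemma 3.5: the complement `U ∖ (ℋ⁺ ∪ ℋ⁻)` of the barrier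
hypersurface has exactly three connected components, namely `V⁺`, `V⁻` and
`V`. -/
theorem barrier_three_components (M : ℝ) (hM : 0 < M) (f : ℝ → ℝ)
    (hf_cont : ContinuousOn f (Set.Ici 0))
    (hf_mono : MonotoneOn f (Set.Ici 0))
    (hf0 : f 0 = 0)
    (hf_pos : ∀ x > (0 : ℝ), 0 < f x)
    (hf_le : ∀ x ≥ (0 : ℝ), f x ≤ 1 / 2) :
    Uset \ (Hplus M f ∪ Hminus M f) = Vplus M f ∪ Vminus M f ∪ Vmid M f ∧
    (Vplus M f).Nonempty ∧ (Vminus M f).Nonempty ∧ (Vmid M f).Nonempty ∧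
    Disjoint (Vplus M f) (Vminus M f) ∧
    Disjoint (Vplus M f) (Vmid M f) ∧
    Disjoint (Vminus M f) (Vmid M f) ∧
    (∀ p ∈ Vplus M f,
      connectedComponentIn (Uset \ (Hplus M f ∪ Hminus M f)) p = Vplus M f) ∧
    (∀ p ∈ Vminus M f,
      connectedComponentIn (Uset \ (Hplus M f ∪ Hminus M f)) p = Vminus M f) ∧
    (∀ p ∈ Vmid M f,
      connectedComponentIn (Uset \ (Hplus M f ∪ Hminus M f)) p = Vmid M f) :=
  barrier_three_components_general M hM f hf_cont hf0 hf_pos hf_le
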